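/- For coprime integers a, b with 1 ≤ a ≤ b, the polynomial P_{a/b}(u,v,w) is a homogeneous polynomial of total degree a+b−1 whose coefficients are all non-negative integers, and P_{a/b} is divisible by none of u, v, w. Consequently M_{a/b}(x,y,z) = P_{a/b}(x^2,y^2,z^2)/(x^{a−1} y^{b−1} z^{a+b−1}) is a Laurent polynomial in x,y,z with non-negative integer coefficients whose denominator x^{a−1} y^{b−1} z^{a+b−1} is in lowest terms. -/

import Mathlib

open MvPolynomial

/-- Specification of the Markov numerator polynomials `P a b` (for coprime `a ≤ b`),
defined by the base cases `P 0 1 = 1`, `P 1 1 = u + v`, `P 1 2 = (u+v)^2 + u*w`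
and the Farey-parent recursion
`P (a/b) = (u+v+w) * P (p1/q1) * P (p2/q2) - u^p1 * v^q1 * w^(p1+q1) * P ((p2-p1)/(q2-q1))`,
where `p1/q1` and `p2/q2` are the Farey parents of `a/b`, ordered so that `q1 < q2`.
Here the variables are `u = X 0`, `v = X 1`, `w = X 2`. -/
structure MarkovNumerator (P : ℕ → ℕ → MvPolynomial (Fin 3) ℤ) : Prop where
  base01 : P 0 1 = 1
  base11 : P 1 1 = X 0 + X 1
  base12 : P 1 2 = (X 0 + X 1) ^ 2 + X 0 * X 2
  farey : ∀ a b p1 q1 p2 q2 : ℕ, 1 ≤ a → a < b → 3 ≤ b → Nat.Coprime a b →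
    p1 + p2 = a → q1 + q2 = b → q1 < q2 →
    ((p1 : ℤ) * q2 - (p2 : ℤ) * q1 = 1 ∨ (p2 : ℤ) * q1 - (p1 : ℤ) * q2 = 1) →
    P a b = (X 0 + X 1 + X 2) * P p1 q1 * P p2 q2
      - X 0 ^ p1 * X 1 ^ q1 * X 2 ^ (p1 + q1) * P (p2 - p1) (q2 - q1)


open Matrix

abbrev R3 := MvPolynomial (Fin 3) ℤ

noncomputable def Am : Matrix (Fin 2) (Fin 2) R3 := !![X 0, X 0 * X 1; 1, X 1 + X 2]
noncomputable def Bm : Matrix (Fin 2) (Fin 2) R3 := !![X 0 + X 2, X 0 * X 1; 1, X 1]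

noncomputable def letter (a n i : ℕ) : Matrix (Fin 2) (Fin 2) R3 :=
  if ((i+1)*a)/n = (i*a)/n then Bm else Am

noncomputable def Mm (a b : ℕ) : Matrix (Fin 2) (Fin 2) R3 :=
  ((List.range (a+b)).map (letter a (a+b))).prod

lemma letter_cases (a n i : ℕ) : letter a n i = Am ∨ letter a n i = Bm := by
  unfold letter; split
  · exact Or.inr rfl
  · exact Or.inl rfl

lemma div_prefix {AL AR NL NR : ℕ} (h : AR*NL = AL*NR + 1) (hNL : 1 ≤ NL) (hNR : 1 ≤ NR)
    {i : ℕ} (hi : i ≤ NL) : (i*(AL+AR))/(NL+NR) = (i*AL)/NL := by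
  have hN0 : (0:ℤ) < (NL:ℤ) := by exact_mod_cast hNL
  set q := i*AL/NL with hq
  have hdm : NL * q + (i*AL % NL) = i*AL := Nat.div_add_mod _ _
  set r := i*AL % NL with hr
  have hrlt : r < NL := Nat.mod_lt _ hNL
  have hdmz : (NL:ℤ) * q + r = (i:ℤ)*AL := by exact_mod_cast hdm
  have hz : (AR:ℤ)*NL = (AL:ℤ)*NR + 1 := by exact_mod_cast h
  have hAz : ((AL:ℤ)+AR)*NL = (AL:ℤ)*((NL:ℤ)+NR) + 1 := by linear_combination hz
  have key : ((i:ℤ))*((AL:ℤ)+AR)*NL = ((q:ℤ)*((NL:ℤ)+NR))*NL + ((r:ℤ)*((NL:ℤ)+NR) + i) := by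
    linear_combination (i:ℤ)*hAz - ((NL:ℤ)+NR)*hdmz
  have h1z : (q:ℤ)*((NL:ℤ)+NR) ≤ (i:ℤ)*((AL:ℤ)+AR) := by
    have h' : (q:ℤ)*((NL:ℤ)+NR)*NL ≤ (i:ℤ)*((AL:ℤ)+AR)*NL := by
      rw [key]
      have : (0:ℤ) ≤ (r:ℤ)*((NL:ℤ)+NR) + i := by positivity
      linarith
    exact le_of_mul_le_mul_right h' hN0
  have h2z : (i:ℤ)*((AL:ℤ)+AR) < ((q:ℤ)+1)*((NL:ℤ)+NR) := by
    have hr' : (r:ℤ) + 1 ≤ NL := by exact_mod_cast hrlt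
    have hi' : (i:ℤ) ≤ NL := by exact_mod_cast hi
    have hNR' : (1:ℤ) ≤ NR := by exact_mod_cast hNR
    have hmul : (r:ℤ)*((NL:ℤ)+NR) ≤ ((NL:ℤ)-1)*((NL:ℤ)+NR) := by
      apply mul_le_mul_of_nonneg_right (by linarith) (by positivity)
    have h' : (i:ℤ)*((AL:ℤ)+AR)*NL < ((q:ℤ)+1)*((NL:ℤ)+NR)*NL := by
      rw [key]; nlinarith
    exact lt_of_mul_lt_mul_right h' (le_of_lt hN0)
  have h1 : q*(NL+NR) ≤ i*(AL+AR) := by exact_mod_cast h1z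
  have h2 : i*(AL+AR) < (q+1)*(NL+NR) := by exact_mod_cast h2z
  exact Nat.div_eq_of_lt_le h1 h2

lemma div_suffix {AL AR NL NR : ℕ} (h : AR*NL = AL*NR + 1) (hNL : 1 ≤ NL) (hNR : 1 ≤ NR)
    {j : ℕ} (hj : j ≤ NR) : ((NL+j)*(AL+AR))/(NL+NR) = AL + (j*AR)/NR := by
  have hN0 : (0:ℤ) < (NR:ℤ) := by exact_mod_cast hNR
  set t := j*AR/NR with ht
  have hdm : NR * t + (j*AR % NR) = j*AR := Nat.div_add_mod _ _
  set s := j*AR % NR with hs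
  have hslt : s < NR := Nat.mod_lt _ hNR
  have hdmz : (NR:ℤ) * t + s = (j:ℤ)*AR := by exact_mod_cast hdm
  have hz : (AR:ℤ)*NL = (AL:ℤ)*NR + 1 := by exact_mod_cast h
  have hAz : (AR:ℤ)*((NL:ℤ)+NR) = ((AL:ℤ)+AR)*(NR:ℤ) + 1 := by linear_combination hz
  have key : (((NL:ℤ)+j)*((AL:ℤ)+AR))*NR + (j:ℤ)
      = ((((AL:ℤ)+t)*((NL:ℤ)+NR)))*NR + ((s:ℤ)*((NL:ℤ)+NR) + NR) := by
    linear_combination (-(NL:ℤ)-(j:ℤ))*hAz - ((NL:ℤ)+(NR:ℤ))*hdmz + ((NL:ℤ)+(NR:ℤ))*hz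
  have h1z : ((AL:ℤ)+t)*((NL:ℤ)+NR) ≤ ((NL:ℤ)+j)*((AL:ℤ)+AR) := by
    have hj' : (j:ℤ) ≤ NR := by exact_mod_cast hj
    have h' : ((AL:ℤ)+t)*((NL:ℤ)+NR)*NR ≤ ((NL:ℤ)+j)*((AL:ℤ)+AR)*NR := by
      have : (0:ℤ) ≤ (s:ℤ)*((NL:ℤ)+NR) := by positivity
      nlinarith [key]
    exact le_of_mul_le_mul_right h' hN0
  have h2z : ((NL:ℤ)+j)*((AL:ℤ)+AR) < ((AL:ℤ)+t+1)*((NL:ℤ)+NR) := by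
    have hs' : (s:ℤ) + 1 ≤ NR := by exact_mod_cast hslt
    have hj' : (0:ℤ) ≤ j := by positivity
    have hNL' : (1:ℤ) ≤ NL := by exact_mod_cast hNL
    have hmul : (s:ℤ)*((NL:ℤ)+NR) ≤ ((NR:ℤ)-1)*((NL:ℤ)+NR) := by
      apply mul_le_mul_of_nonneg_right (by linarith) (by positivity)
    have h' : ((NL:ℤ)+j)*((AL:ℤ)+AR)*NR < ((AL:ℤ)+t+1)*((NL:ℤ)+NR)*NR := by
      nlinarith [key]
    exact lt_of_mul_lt_mul_right h' (le_of_lt hN0)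
  have h1 : (AL+t)*(NL+NR) ≤ (NL+j)*(AL+AR) := by exact_mod_cast h1z
  have h2 : (NL+j)*(AL+AR) < (AL+t+1)*(NL+NR) := by exact_mod_cast h2z
  rw [Nat.div_eq_of_lt_le h1 h2]

lemma letter_prefix {AL AR NL NR : ℕ} (h : AR*NL = AL*NR + 1) (hNL : 1 ≤ NL) (hNR : 1 ≤ NR)
    {i : ℕ} (hi : i < NL) : letter (AL+AR) (NL+NR) i = letter AL NL i := by
  unfold letter
  rw [div_prefix h hNL hNR (by omega : i+1 ≤ NL), div_prefix h hNL hNR (by omega : i ≤ NL)]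

lemma letter_suffix {AL AR NL NR : ℕ} (h : AR*NL = AL*NR + 1) (hNL : 1 ≤ NL) (hNR : 1 ≤ NR)
    {j : ℕ} (hj : j < NR) : letter (AL+AR) (NL+NR) (NL+j) = letter AR NR j := by
  unfold letter
  have e : NL + j + 1 = NL + (j+1) := by omega
  rw [e, div_suffix h hNL hNR (by omega : j+1 ≤ NR), div_suffix h hNL hNR (by omega : j ≤ NR)]
  simp

lemma Mm_concat {x1 y1 x2 y2 : ℕ} (h : x2*y1 = x1*y2 + 1) (hy1 : 1 ≤ y1) (hy2 : 1 ≤ y2) :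
    Mm (x1+x2) (y1+y2) = Mm x1 y1 * Mm x2 y2 := by
  have h' : x2*(x1+y1) = x1*(x2+y2) + 1 := by
    have e : x2*(x1+y1) = x1*x2 + x2*y1 := by ring
    rw [e, h]; ring
  have hNL : 1 ≤ x1 + y1 := by omega
  have hNR : 1 ≤ x2 + y2 := by omega
  have hn : (x1+x2)+(y1+y2) = (x1+y1)+(x2+y2) := by ring
  rw [Mm, Mm, Mm, hn, List.range_add, List.map_append, List.prod_append]
  congr 1
  · congr 1
    apply List.map_congr_left
    intro i hi
    exact letter_prefix h' hNL hNR (List.mem_range.mp hi)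
  · congr 1
    rw [List.map_map]
    apply List.map_congr_left
    intro j hj
    exact letter_suffix h' hNL hNR (List.mem_range.mp hj)

lemma ch1 (X Y : Matrix (Fin 2) (Fin 2) R3) :
    X * (X * Y) = (X 0 0 + X 1 1) • (X * Y) - X.det • Y := by
  refine Matrix.ext fun i j => ?_
  fin_cases i <;> fin_cases j <;>
    simp [Matrix.mul_apply, Fin.sum_univ_two, Matrix.det_fin_two, Matrix.sub_apply,
      Matrix.smul_apply, smul_eq_mul] <;> ring

lemma ch2 (X Y : Matrix (Fin 2) (Fin 2) R3) :
    (Y * X) * X = (X 0 0 + X 1 1) • (Y * X) - X.det • Y := by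
  refine Matrix.ext fun i j => ?_
  fin_cases i <;> fin_cases j <;>
    simp [Matrix.mul_apply, Fin.sum_univ_two, Matrix.det_fin_two, Matrix.sub_apply,
      Matrix.smul_apply, smul_eq_mul] <;> ring

lemma Mm01 : Mm 0 1 = Bm := by
  norm_num [Mm, letter, List.range_succ]

lemma Mm11 : Mm 1 1 = Bm * Am := by
  norm_num [Mm, letter, List.range_succ]

lemma Mm12 : Mm 1 2 = Bm * (Bm * Am) := by
  norm_num [Mm, letter, List.range_succ, mul_assoc]

def NN (p : R3) : Prop := ∀ m, 0 ≤ coeff m p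

lemma NN.zero : NN 0 := fun m => by simp
lemma NN.one : NN 1 := fun m => by
  simp [coeff_one]; split <;> norm_num
lemma NN.X (i : Fin 3) : NN (X i) := fun m => by
  rw [coeff_X']; split <;> norm_num
lemma NN.add {p q : R3} (hp : NN p) (hq : NN q) : NN (p + q) := fun m => by
  rw [coeff_add]; exact add_nonneg (hp m) (hq m)
lemma NN.mul {p q : R3} (hp : NN p) (hq : NN q) : NN (p * q) := fun m => by
  rw [coeff_mul]
  exact Finset.sum_nonneg fun x _ => mul_nonneg (hp x.1) (hq x.2)

lemma NN_letter (a n i : ℕ) (r c : Fin 2) : NN (letter a n i r c) := by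
  rcases letter_cases a n i with h | h <;> rw [h] <;> fin_cases r <;> fin_cases c <;>
    simp [Am, Bm] <;>
    first
      | exact NN.X _
      | exact NN.one
      | exact (NN.X _).mul (NN.X _)
      | exact (NN.X _).add (NN.X _)

lemma NN_prod (l : List (Matrix (Fin 2) (Fin 2) R3)) (h : ∀ L ∈ l, ∀ r c, NN (L r c)) :
    ∀ r c, NN (l.prod r c) := by
  induction l with
  | nil =>
    intro r c
    rw [List.prod_nil, Matrix.one_apply]
    split
    · exact NN.one
    · exact NN.zero
  | cons L l ih =>
    intro r c
    rw [List.prod_cons, Matrix.mul_apply, Fin.sum_univ_two]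
    have hL := h L List.mem_cons_self
    have hl := ih (fun M hM => h M (List.mem_cons_of_mem _ hM))
    exact ((hL r 0).mul (hl 0 c)).add ((hL r 1).mul (hl 1 c))

lemma NN_Mm (a b : ℕ) (r c : Fin 2) : NN (Mm a b r c) := by
  apply NN_prod
  intro L hL
  obtain ⟨i, _, rfl⟩ := List.mem_map.mp hL
  exact NN_letter _ _ _

-- homogeneity
lemma letter_homog {L : Matrix (Fin 2) (Fin 2) R3} (h : L = Am ∨ L = Bm) (r c : Fin 2) :
    (L r c).IsHomogeneous (1 + c.val - r.val) := by
  rcases h with h | h <;> rw [h] <;> fin_cases r <;> fin_cases c <;> simp [Am, Bm] <;>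
    first
      | exact isHomogeneous_X _ _
      | exact isHomogeneous_one _ _
      | exact (isHomogeneous_X _ _).mul (isHomogeneous_X _ _)
      | exact (isHomogeneous_X _ _).add (isHomogeneous_X _ _)

lemma homog_prod (l : List (Matrix (Fin 2) (Fin 2) R3)) (h : ∀ L ∈ l, L = Am ∨ L = Bm)
    (hne : l ≠ []) : ∀ r c : Fin 2, (l.prod r c).IsHomogeneous (l.length + c.val - r.val) := by
  induction l with
  | nil => exact absurd rfl hne
  | cons L l ih =>
    intro r c
    rcases eq_or_ne l [] with rfl | hl
    · simp only [List.prod_cons, List.prod_nil, mul_one, List.length_cons, List.length_nil]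
      exact letter_homog (h L List.mem_cons_self) r c
    · have hlen : 1 ≤ l.length := List.length_pos_iff.mpr hl
      rw [List.prod_cons, Matrix.mul_apply, Fin.sum_univ_two]
      have hL := letter_homog (h L List.mem_cons_self)
      have hl2 := ih (fun M hM => h M (List.mem_cons_of_mem _ hM)) hl
      apply MvPolynomial.IsHomogeneous.add
      · have e : (1 + (0:Fin 2).val - r.val) + (l.length + c.val - (0:Fin 2).val)
            = (L :: l).length + c.val - r.val := by
          simp only [List.length_cons]
          have : r.val ≤ 1 := Fin.is_le r
          omega
        exact e ▸ (hL r 0).mul (hl2 0 c)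
      · have e : (1 + (1:Fin 2).val - r.val) + (l.length + c.val - (1:Fin 2).val)
            = (L :: l).length + c.val - r.val := by
          simp only [List.length_cons]
          have : r.val ≤ 1 := Fin.is_le r
          have : c.val ≤ 1 := Fin.is_le c
          omega
        exact e ▸ (hL r 1).mul (hl2 1 c)

lemma homog_Mm {a b : ℕ} (hb : 1 ≤ b) (r c : Fin 2) :
    (Mm a b r c).IsHomogeneous (a + b + c.val - r.val) := by
  have h := homog_prod ((List.range (a+b)).map (letter a (a+b)))
    (by intro L hL; obtain ⟨i, _, rfl⟩ := List.mem_map.mp hL; exact letter_cases _ _ _)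
    (by simp; omega) r c
  simpa [Mm] using h

/-- positivity invariant 1: letters with nonneg entries and bottom row ≥ 1. -/
lemma prod_pos1 (l : List (Matrix (Fin 2) (Fin 2) ℤ))
    (h : ∀ L ∈ l, (∀ r c, 0 ≤ L r c) ∧ 1 ≤ L 1 0 ∧ 1 ≤ L 1 1) (hne : l ≠ []) :
    (∀ r c, 0 ≤ l.prod r c) ∧ 1 ≤ l.prod 1 0 ∧ 1 ≤ l.prod 1 1 := by
  induction l with
  | nil => exact absurd rfl hne
  | cons L l ih =>
    have hL := h L List.mem_cons_self
    rcases eq_or_ne l [] with rfl | hl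
    · simpa using hL
    · obtain ⟨hP, hP10, hP11⟩ := ih (fun M hM => h M (List.mem_cons_of_mem _ hM)) hl
      rw [List.prod_cons]
      refine ⟨fun r c => ?_, ?_, ?_⟩
      · rw [Matrix.mul_apply, Fin.sum_univ_two]
        exact add_nonneg (mul_nonneg (hL.1 r 0) (hP 0 c)) (mul_nonneg (hL.1 r 1) (hP 1 c))
      · rw [Matrix.mul_apply, Fin.sum_univ_two]
        nlinarith [hL.1 1 0, hP 0 0, hL.2.2, hP10]
      · rw [Matrix.mul_apply, Fin.sum_univ_two]
        nlinarith [hL.1 1 0, hP 0 1, hL.2.2, hP11]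

/-- positivity invariant 2: letters with nonneg entries and first column ≥ 1. -/
lemma prod_pos2 (l : List (Matrix (Fin 2) (Fin 2) ℤ))
    (h : ∀ L ∈ l, (∀ r c, 0 ≤ L r c) ∧ 1 ≤ L 0 0 ∧ 1 ≤ L 1 0) (hne : l ≠ []) :
    (∀ r c, 0 ≤ l.prod r c) ∧ 1 ≤ l.prod 0 0 ∧ 1 ≤ l.prod 1 0 := by
  induction l with
  | nil => exact absurd rfl hne
  | cons L l ih =>
    have hL := h L List.mem_cons_self
    rcases eq_or_ne l [] with rfl | hl
    · simpa using hL
    · obtain ⟨hP, hP00, hP10⟩ := ih (fun M hM => h M (List.mem_cons_of_mem _ hM)) hl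
      rw [List.prod_cons]
      refine ⟨fun r c => ?_, ?_, ?_⟩
      · rw [Matrix.mul_apply, Fin.sum_univ_two]
        exact add_nonneg (mul_nonneg (hL.1 r 0) (hP 0 c)) (mul_nonneg (hL.1 r 1) (hP 1 c))
      · rw [Matrix.mul_apply, Fin.sum_univ_two]
        nlinarith [hL.1 0 1, hP 1 0, hL.2.1, hP00]
      · rw [Matrix.mul_apply, Fin.sum_univ_two]
        nlinarith [hL.1 1 1, hP 1 0, hL.2.2, hP00]

noncomputable def ev (f : Fin 3 → ℤ) : R3 →+* ℤ := MvPolynomial.eval f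

lemma ev_Mm (f : Fin 3 → ℤ) (a b : ℕ) :
    (ev f).mapMatrix (Mm a b)
      = ((List.range (a+b)).map (fun i => (ev f).mapMatrix (letter a (a+b) i))).prod := by
  rw [Mm, ← List.prod_hom _ ((ev f).mapMatrix : Matrix (Fin 2) (Fin 2) R3 →+* _), List.map_map]
  rfl

-- the three specializations of the letters
/-- key positivity: the (1,0) entry of the specialized matrix is ≥ 1 -/
lemma ev_entry_pos (f : Fin 3 → ℤ)
    (hA : (∀ r c, 0 ≤ ((ev f).mapMatrix Am) r c) ∧
      ((1 ≤ ((ev f).mapMatrix Am) 1 0 ∧ 1 ≤ ((ev f).mapMatrix Am) 1 1 ∧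
        1 ≤ ((ev f).mapMatrix Bm) 1 0 ∧ 1 ≤ ((ev f).mapMatrix Bm) 1 1) ∨
       (1 ≤ ((ev f).mapMatrix Am) 0 0 ∧ 1 ≤ ((ev f).mapMatrix Am) 1 0 ∧
        1 ≤ ((ev f).mapMatrix Bm) 0 0 ∧ 1 ≤ ((ev f).mapMatrix Bm) 1 0)))
    (hB : ∀ r c, 0 ≤ ((ev f).mapMatrix Bm) r c)
    {a b : ℕ} (hb : 1 ≤ b) : 1 ≤ ev f (Mm a b 1 0) := by
  have hne : ((List.range (a+b)).map (fun i => (ev f).mapMatrix (letter a (a+b) i))) ≠ [] := by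
    simp; omega
  have he : ev f (Mm a b 1 0) = ((ev f).mapMatrix (Mm a b)) 1 0 := rfl
  rw [he, ev_Mm]
  rcases hA.2 with h1 | h2
  · refine (prod_pos1 _ ?_ hne).2.1
    intro L hL
    obtain ⟨i, _, rfl⟩ := List.mem_map.mp hL
    rcases letter_cases a (a+b) i with h | h <;> rw [h]
    · exact ⟨hA.1, h1.1, h1.2.1⟩
    · exact ⟨hB, h1.2.2.1, h1.2.2.2⟩
  · refine (prod_pos2 _ ?_ hne).2.2
    intro L hL
    obtain ⟨i, _, rfl⟩ := List.mem_map.mp hL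
    rcases letter_cases a (a+b) i with h | h <;> rw [h]
    · exact ⟨hA.1, h2.1, h2.2.1⟩
    · exact ⟨hB, h2.2.2.1, h2.2.2.2⟩

lemma parent_exists {a b : ℕ} (ha : 1 ≤ a) (hab : a < b) (hb : 3 ≤ b) (hcop : Nat.Coprime a b) :
    ∃ p1 q1 p2 q2 : ℕ, p1 + p2 = a ∧ q1 + q2 = b ∧ q1 < q2 ∧
      ((p1 : ℤ) * q2 - (p2 : ℤ) * q1 = 1 ∨ (p2 : ℤ) * q1 - (p1 : ℤ) * q2 = 1) := by
  obtain ⟨m, -, hm⟩ := Nat.exists_mul_mod_eq_one_of_coprime hcop (by omega)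
  obtain ⟨q0, hq0b, hm'⟩ : ∃ q0, q0 < b ∧ a * q0 % b = 1 :=
    ⟨m % b, Nat.mod_lt _ (by omega),
      by rw [Nat.mul_mod, Nat.mod_mod_of_dvd _ dvd_rfl, ← Nat.mul_mod, hm]⟩
  have hq00 : 1 ≤ q0 := by
    rcases Nat.eq_zero_or_pos q0 with h | h
    · subst h; simp at hm'
    · exact h
  obtain ⟨k, hk⟩ : ∃ k, a * q0 = b * k + 1 :=
    ⟨a * q0 / b, by have := Nat.div_add_mod (a * q0) b; omega⟩
  have hkz : (a:ℤ) * q0 = (b:ℤ) * k + 1 := by exact_mod_cast hk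
  have hk_lt : k < a := by
    by_contra hc
    push_neg at hc
    have h1 : (a:ℤ) ≤ k := by exact_mod_cast hc
    have h2 : (q0:ℤ) + 1 ≤ b := by exact_mod_cast hq0b
    have h3 : (1:ℤ) ≤ a := by exact_mod_cast ha
    have h4 : (1:ℤ) ≤ q0 := by exact_mod_cast hq00
    nlinarith [hkz]
  have hq0ne : 2 * q0 ≠ b := by
    intro hc
    have hdvd : (q0:ℤ) ∣ 1 := by
      have e1 : (q0:ℤ) ∣ (a:ℤ) * q0 := dvd_mul_left (q0:ℤ) (a:ℤ)
      have e2 : (q0:ℤ) ∣ (b:ℤ) * k := by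
        have hbz : (b:ℤ) = 2 * q0 := by exact_mod_cast hc.symm
        rw [hbz]
        exact Dvd.dvd.mul_right (Dvd.dvd.mul_left dvd_rfl 2) (k:ℤ)
      have : (1:ℤ) = (a:ℤ)*q0 - (b:ℤ)*k := by linarith [hkz]
      rw [this]
      exact dvd_sub e1 e2
    have : q0 = 1 := by
      have := Int.le_of_dvd one_pos hdvd
      omega
    omega
  rcases lt_or_gt_of_ne hq0ne with hlt | hgt
  · -- 2*q0 < b : q1 = q0, q2 = b - q0, p1 = k, p2 = a - k
    refine ⟨k, q0, a - k, b - q0, by omega, by omega, by omega, Or.inr ?_⟩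
    have c1 : ((a - k : ℕ) : ℤ) = (a:ℤ) - k := by
      rw [Nat.cast_sub (le_of_lt hk_lt)]
    have c2 : ((b - q0 : ℕ) : ℤ) = (b:ℤ) - q0 := by
      rw [Nat.cast_sub (le_of_lt hq0b)]
    rw [c1, c2]
    linarith [hkz]
  · -- b < 2*q0 : q1 = b - q0, q2 = q0, p1 = a - k, p2 = k
    refine ⟨a - k, b - q0, k, q0, by omega, by omega, by omega, Or.inl ?_⟩
    have c1 : ((a - k : ℕ) : ℤ) = (a:ℤ) - k := by
      rw [Nat.cast_sub (le_of_lt hk_lt)]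
    have c2 : ((b - q0 : ℕ) : ℤ) = (b:ℤ) - q0 := by
      rw [Nat.cast_sub (le_of_lt hq0b)]
    rw [c1, c2]
    linarith [hkz]

lemma coprime_of_det {x y : ℕ} (h : ∃ u v : ℤ, (x:ℤ) * u + (y:ℤ) * v = 1) : Nat.Coprime x y := by
  obtain ⟨u, v, huv⟩ := h
  rcases Nat.eq_zero_or_pos (Nat.gcd x y) with h0 | h0
  · obtain ⟨rfl, rfl⟩ := Nat.gcd_eq_zero_iff.mp h0
    simp at huv
  · have hg : ((Nat.gcd x y : ℕ) : ℤ) ∣ 1 := by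
      rw [← huv]
      exact dvd_add (Dvd.dvd.mul_right (Int.natCast_dvd_natCast.mpr (Nat.gcd_dvd_left x y)) u)
        (Dvd.dvd.mul_right (Int.natCast_dvd_natCast.mpr (Nat.gcd_dvd_right x y)) v)
    have h1 := Int.le_of_dvd one_pos hg
    have h2 : Nat.gcd x y ≤ 1 := by exact_mod_cast h1
    unfold Nat.Coprime
    omega

set_option maxHeartbeats 2000000 in
lemma parent_facts {a b p1 q1 p2 q2 : ℕ} (hab : a < b) (hs1 : p1 + p2 = a) (hs2 : q1 + q2 = b)
    (hq : q1 < q2)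
    (hdet : (p1 : ℤ) * q2 - (p2 : ℤ) * q1 = 1 ∨ (p2 : ℤ) * q1 - (p1 : ℤ) * q2 = 1) :
    1 ≤ q1 ∧ p1 ≤ p2 ∧ p1 ≤ q1 ∧ p2 ≤ q2 ∧ p2 - p1 ≤ q2 - q1 ∧
      Nat.Coprime p1 q1 ∧ Nat.Coprime p2 q2 ∧ Nat.Coprime (p2 - p1) (q2 - q1) := by
  have hsz1 : (p1:ℤ) + p2 = a := by exact_mod_cast hs1
  have hsz2 : (q1:ℤ) + q2 = b := by exact_mod_cast hs2
  have habz : (a:ℤ) < b := by exact_mod_cast hab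
  have hqz : (q1:ℤ) < q2 := by exact_mod_cast hq
  have h0 : (0:ℤ) ≤ p1 := by positivity
  have h0' : (0:ℤ) ≤ p2 := by positivity
  have h0q : (0:ℤ) ≤ q1 := by positivity
  have h0q' : (0:ℤ) ≤ q2 := by positivity
  -- q1 ≥ 1
  have hq1 : 1 ≤ q1 := by
    by_contra hc
    push_neg at hc
    interval_cases q1
    rcases hdet with h | h
    · have h' : p1 * q2 = 1 := by
        have : (p1:ℤ) * q2 = 1 := by push_cast at h; linarith
        exact_mod_cast this
      have h2 := Nat.eq_one_of_mul_eq_one_right h'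
      have h3 := Nat.eq_one_of_mul_eq_one_left h'
      omega
    · have hnn : (0:ℤ) ≤ (p1:ℤ) * q2 := mul_nonneg h0 h0q'
      push_cast at h
      linarith
  have hq1z : (1:ℤ) ≤ q1 := by exact_mod_cast hq1
  -- p1 ≤ p2
  have hp12 : p1 ≤ p2 := by
    by_contra hc
    push_neg at hc
    have hcz : (p2:ℤ) + 1 ≤ p1 := by exact_mod_cast hc
    rcases hdet with h | h <;> nlinarith
  -- p2 ≤ q2
  have hp2q2 : p2 ≤ q2 := by
    by_contra hc
    push_neg at hc
    have hcz : (q2:ℤ) + 1 ≤ p2 := by exact_mod_cast hc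
    rcases hdet with h | h <;> nlinarith
  -- p1 ≤ q1
  have hp1q1 : p1 ≤ q1 := by
    by_contra hc
    push_neg at hc
    have hcz : (q1:ℤ) + 1 ≤ p1 := by exact_mod_cast hc
    rcases hdet with h | h <;> nlinarith
  have hp12z : (p1:ℤ) ≤ p2 := by exact_mod_cast hp12
  have hp1q1z : (p1:ℤ) ≤ q1 := by exact_mod_cast hp1q1
  have hp2q2z : (p2:ℤ) ≤ q2 := by exact_mod_cast hp2q2
  -- coprimalities
  have hc1 : Nat.Coprime p1 q1 := by
    apply coprime_of_det
    rcases hdet with h | h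
    · exact ⟨q2, -p2, by linarith⟩
    · exact ⟨-q2, p2, by linarith⟩
  have hc2 : Nat.Coprime p2 q2 := by
    apply coprime_of_det
    rcases hdet with h | h
    · exact ⟨-q1, p1, by linarith⟩
    · exact ⟨q1, -p1, by linarith⟩
  have e1 : ((p2 - p1 : ℕ) : ℤ) = (p2:ℤ) - p1 := by rw [Nat.cast_sub hp12]
  have e2 : ((q2 - q1 : ℕ) : ℤ) = (q2:ℤ) - q1 := by rw [Nat.cast_sub (le_of_lt hq)]
  -- d1 ≤ d2
  have hd : p2 - p1 ≤ q2 - q1 := by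
    by_contra hc
    push_neg at hc
    have hcn : q2 + p1 + 1 ≤ p2 + q1 := by omega
    have hcz : (q2:ℤ) + p1 + 1 ≤ (p2:ℤ) + q1 := by exact_mod_cast hcn
    rcases lt_or_eq_of_le hp1q1 with hlt | heq
    · have hltz : (p1:ℤ) + 1 ≤ q1 := by exact_mod_cast hlt
      have hm := mul_le_mul_of_nonneg_right hcz h0q
      have hd1 : (1:ℤ) ≤ (q2:ℤ) - q1 := by linarith
      have hd2 : (1:ℤ) ≤ (q1:ℤ) - p1 := by linarith
      have hdd : (1:ℤ) ≤ ((q2:ℤ) - q1) * ((q1:ℤ) - p1) := by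
        calc (1:ℤ) = 1 * 1 := by ring
        _ ≤ ((q2:ℤ) - q1) * ((q1:ℤ) - p1) :=
          mul_le_mul hd1 hd2 (by norm_num) (by linarith)
      rcases hdet with h | h <;> linarith [hm, hdd, hq1z]
    · have hq1eq : q1 = 1 := by
        have hgg := hc1
        rw [heq] at hgg
        have := Nat.gcd_self q1
        unfold Nat.Coprime at hgg
        omega
      omega
  refine ⟨hq1, hp12, hp1q1, hp2q2, hd, hc1, hc2, ?_⟩
  apply coprime_of_det
  rcases hdet with h | h
  · refine ⟨-(q1:ℤ), (p1:ℤ), ?_⟩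
    rw [e1, e2]
    linarith [h]
  · refine ⟨(q1:ℤ), -(p1:ℤ), ?_⟩
    rw [e1, e2]
    linarith [h]


lemma Bm10 : Bm 1 0 = 1 := by simp [Bm]
lemma trBm : Matrix.trace Bm = (X 0 + X 1 + X 2) * Bm 1 0 := by
  simp [Bm, Matrix.trace_fin_two]; ring
lemma detBm : Bm.det = X 0 ^ 0 * X 1 ^ 1 * X 2 ^ (0+1) := by
  simp [Bm, Matrix.det_fin_two]; ring
lemma BA10 : (Bm * Am) 1 0 = X 0 + X 1 := by
  simp [Bm, Am, Matrix.mul_apply, Fin.sum_univ_two]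
lemma trBA : Matrix.trace (Bm * Am) = (X 0 + X 1 + X 2) * ((Bm * Am) 1 0) := by
  simp [Bm, Am, Matrix.trace_fin_two, Matrix.mul_apply, Fin.sum_univ_two]; ring
lemma detBA : (Bm * Am).det = X 0 ^ 1 * X 1 ^ 1 * X 2 ^ (1+1) := by
  simp [Bm, Am, Matrix.det_mul, Matrix.det_fin_two]; ring
lemma BBA10 : (Bm * (Bm * Am)) 1 0 = (X 0 + X 1)^2 + X 0 * X 2 := by
  simp [Bm, Am, Matrix.mul_apply, Fin.sum_univ_two]; ring
lemma trBBA : Matrix.trace (Bm * (Bm * Am)) = (X 0 + X 1 + X 2) * ((Bm * (Bm * Am)) 1 0) := by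
  simp [Bm, Am, Matrix.trace_fin_two, Matrix.mul_apply, Fin.sum_univ_two]; ring
lemma detBBA : (Bm * (Bm * Am)).det = X 0 ^ 1 * X 1 ^ 2 * X 2 ^ (1+2) := by
  simp [Bm, Am, Matrix.det_mul, Matrix.det_fin_two]; ring

lemma master (P : ℕ → ℕ → R3) (hP : MarkovNumerator P) :
    ∀ b a : ℕ, Nat.Coprime a b → a ≤ b → 1 ≤ b →
      P a b = Mm a b 1 0 ∧
      Matrix.trace (Mm a b) = (X 0 + X 1 + X 2) * Mm a b 1 0 ∧
      (Mm a b).det = X 0 ^ a * X 1 ^ b * X 2 ^ (a+b) := by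
  intro b
  induction b using Nat.strong_induction_on with
  | _ b IH =>
    intro a hcop hab hb
    rcases Nat.lt_or_ge b 3 with hb3 | hb3
    · interval_cases b
      · interval_cases a
        · exact ⟨by rw [hP.base01, Mm01, Bm10], by rw [Mm01]; exact trBm, by rw [Mm01]; exact detBm⟩
        · exact ⟨by rw [hP.base11, Mm11, BA10], by rw [Mm11]; exact trBA, by rw [Mm11]; exact detBA⟩
      · interval_cases a
        · exfalso; simp [Nat.Coprime] at hcop
        · exact ⟨by rw [hP.base12, Mm12, BBA10], by rw [Mm12]; exact trBBA,
            by rw [Mm12]; exact detBBA⟩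
        · exfalso; simp [Nat.Coprime] at hcop
    · have ha1 : 1 ≤ a := by
        rcases Nat.eq_zero_or_pos a with rfl | h
        · rw [Nat.coprime_zero_left] at hcop; omega
        · exact h
      have hlt : a < b := by
        rcases lt_or_eq_of_le hab with h | h
        · exact h
        · exfalso
          subst h
          have hgg := hcop
          have := Nat.gcd_self a
          unfold Nat.Coprime at hgg
          omega
      obtain ⟨p1, q1, p2, q2, hs1, hs2, hq, hdet⟩ := parent_exists ha1 hlt hb3 hcop
      obtain ⟨hq1, hp12, hp1q1, hp2q2, hdle, hc1, hc2, hcd⟩ := parent_facts hlt hs1 hs2 hq hdet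
      have S1 := IH q1 (by omega) p1 hc1 hp1q1 hq1
      have S2 := IH q2 (by omega) p2 hc2 hp2q2 (by omega)
      have Sd := IH (q2 - q1) (by omega) (p2 - p1) hcd hdle (by omega)
      set Xm := Mm p1 q1 with hXm
      set Ym := Mm (p2 - p1) (q2 - q1) with hYm
      have c1 : ((p2 - p1 : ℕ):ℤ) = (p2:ℤ) - p1 := by rw [Nat.cast_sub hp12]
      have c2 : ((q2 - q1 : ℕ):ℤ) = (q2:ℤ) - q1 := by rw [Nat.cast_sub (le_of_lt hq)]
      have hdec : Mm a b = (Xm 0 0 + Xm 1 1) • Mm p2 q2 - Xm.det • Ym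
          ∧ (Mm a b).det = Xm.det * (Mm p2 q2).det := by
        rcases hdet with h | h
        · have hn1 : p1 * q2 = p2 * q1 + 1 := by
            have hz : (p1:ℤ) * q2 = (p2:ℤ) * q1 + 1 := by linarith
            exact_mod_cast hz
          have e1 : Mm a b = Mm p2 q2 * Mm p1 q1 := by
            have := Mm_concat (x1 := p2) (y1 := q2) (x2 := p1) (y2 := q1) hn1
              (by omega) (by omega)
            rwa [show p2 + p1 = a by omega, show q2 + q1 = b by omega] at this
          have hn2 : p1 * (q2 - q1) = (p2 - p1) * q1 + 1 := by
            have hz : (p1:ℤ) * ((q2 - q1 : ℕ):ℤ) = ((p2 - p1 : ℕ):ℤ) * q1 + 1 := by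
              rw [c1, c2]; linarith
            exact_mod_cast hz
          have e2 : Mm p2 q2 = Ym * Xm := by
            have := Mm_concat (x1 := p2 - p1) (y1 := q2 - q1) (x2 := p1) (y2 := q1) hn2
              (by omega) (by omega)
            rwa [show (p2 - p1) + p1 = p2 by omega, show (q2 - q1) + q1 = q2 by omega] at this
          constructor
          · rw [e1, e2]
            exact ch2 Xm Ym
          · rw [e1, Matrix.det_mul]
            ring
        · have hn1 : p2 * q1 = p1 * q2 + 1 := by
            have hz : (p2:ℤ) * q1 = (p1:ℤ) * q2 + 1 := by linarith
            exact_mod_cast hz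
          have e1 : Mm a b = Mm p1 q1 * Mm p2 q2 := by
            have := Mm_concat (x1 := p1) (y1 := q1) (x2 := p2) (y2 := q2) hn1
              (by omega) (by omega)
            rwa [hs1, hs2] at this
          have hn2 : (p2 - p1) * q1 = p1 * (q2 - q1) + 1 := by
            have hz : ((p2 - p1 : ℕ):ℤ) * q1 = (p1:ℤ) * ((q2 - q1 : ℕ):ℤ) + 1 := by
              rw [c1, c2]; linarith
            exact_mod_cast hz
          have e2 : Mm p2 q2 = Xm * Ym := by
            have := Mm_concat (x1 := p1) (y1 := q1) (x2 := p2 - p1) (y2 := q2 - q1) hn2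
              (by omega) (by omega)
            rwa [show p1 + (p2 - p1) = p2 by omega, show q1 + (q2 - q1) = q2 by omega] at this
          constructor
          · rw [e1, e2]
            exact ch1 Xm Ym
          · rw [e1, Matrix.det_mul]
      obtain ⟨hgP1, hgT1, hgD1⟩ := S1
      obtain ⟨hgP2, hgT2, hgD2⟩ := S2
      obtain ⟨hgPd, hgTd, hgDd⟩ := Sd
      have htr : Xm 0 0 + Xm 1 1 = (X 0 + X 1 + X 2) * Xm 1 0 := by
        rw [← Matrix.trace_fin_two]; exact hgT1
      have hent : Mm a b 1 0 = (X 0 + X 1 + X 2) * Xm 1 0 * Mm p2 q2 1 0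
          - X 0 ^ p1 * X 1 ^ q1 * X 2 ^ (p1+q1) * Ym 1 0 := by
        have h10 := congrArg (fun M : Matrix (Fin 2) (Fin 2) R3 => M 1 0) hdec.1
        simp only [Matrix.sub_apply, Matrix.smul_apply, smul_eq_mul] at h10
        rw [h10, htr, hgD1]
      refine ⟨?_, ?_, ?_⟩
      · rw [hP.farey a b p1 q1 p2 q2 ha1 hlt hb3 hcop hs1 hs2 hq hdet,
          hgP1, hgP2, hgPd, hent]
      · have htrace := congrArg Matrix.trace hdec.1
        rw [Matrix.trace_sub, Matrix.trace_smul, Matrix.trace_smul] at htrace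
        rw [htrace, htr, hgT2, hgTd, hent, hgD1]
        simp only [smul_eq_mul]
        ring
      · rw [hdec.2, hgD1, hgD2, ← hs1, ← hs2]
        ring

lemma pos_u {a b : ℕ} (hb : 1 ≤ b) : 1 ≤ ev ![0,1,1] (Mm a b 1 0) := by
  refine ev_entry_pos _ ⟨?_, Or.inl ⟨?_, ?_, ?_, ?_⟩⟩ ?_ hb
  · intro r c; fin_cases r <;> fin_cases c <;>
      simp [ev, Am, RingHom.mapMatrix_apply, Matrix.map_apply]
  all_goals
    first
      | (intro r c; fin_cases r <;> fin_cases c <;>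
          simp [ev, Bm, RingHom.mapMatrix_apply, Matrix.map_apply])
      | simp [ev, Am, Bm, RingHom.mapMatrix_apply, Matrix.map_apply]

lemma pos_v {a b : ℕ} (hb : 1 ≤ b) : 1 ≤ ev ![1,0,1] (Mm a b 1 0) := by
  refine ev_entry_pos _ ⟨?_, Or.inr ⟨?_, ?_, ?_, ?_⟩⟩ ?_ hb
  · intro r c; fin_cases r <;> fin_cases c <;>
      simp [ev, Am, RingHom.mapMatrix_apply, Matrix.map_apply]
  all_goals
    first
      | (intro r c; fin_cases r <;> fin_cases c <;>
          simp [ev, Bm, RingHom.mapMatrix_apply, Matrix.map_apply])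
      | simp [ev, Am, Bm, RingHom.mapMatrix_apply, Matrix.map_apply]

lemma pos_w {a b : ℕ} (hb : 1 ≤ b) : 1 ≤ ev ![1,1,0] (Mm a b 1 0) := by
  refine ev_entry_pos _ ⟨?_, Or.inl ⟨?_, ?_, ?_, ?_⟩⟩ ?_ hb
  · intro r c; fin_cases r <;> fin_cases c <;>
      simp [ev, Am, RingHom.mapMatrix_apply, Matrix.map_apply]
  all_goals
    first
      | (intro r c; fin_cases r <;> fin_cases c <;>
          simp [ev, Bm, RingHom.mapMatrix_apply, Matrix.map_apply])
      | simp [ev, Am, Bm, RingHom.mapMatrix_apply, Matrix.map_apply]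


/-- For coprime `1 ≤ a ≤ b`, the numerator `P_{a/b}` is homogeneous of degree `a+b-1`,
has non-negative integer coefficients, and is divisible by none of `u`, `v`, `w`;
consequently `M_{a/b} = P_{a/b}(x²,y²,z²)/(x^(a-1) y^(b-1) z^(a+b-1))` is a Laurent
polynomial with non-negative integer coefficients whose denominator is in lowest terms. -/
theorem markov_numerator_structure (P : ℕ → ℕ → MvPolynomial (Fin 3) ℤ)
    (hP : MarkovNumerator P) (a b : ℕ) (ha : 1 ≤ a) (hab : a ≤ b)
    (hcop : Nat.Coprime a b) :
    (P a b).IsHomogeneous (a + b - 1) ∧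
    (∀ m : Fin 3 →₀ ℕ, 0 ≤ MvPolynomial.coeff m (P a b)) ∧
    ¬ (X 0 ∣ P a b) ∧ ¬ (X 1 ∣ P a b) ∧ ¬ (X 2 ∣ P a b) := by
  have hb1 : 1 ≤ b := le_trans ha hab
  obtain ⟨hPe, -, -⟩ := master P hP b a hcop hab hb1
  refine ⟨?_, ?_, ?_, ?_, ?_⟩
  · rw [hPe]
    have h := homog_Mm (a := a) (b := b) hb1 1 0
    have e : a + b + (0 : Fin 2).val - (1 : Fin 2).val = a + b - 1 := rfl
    rwa [e] at h
  · intro m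
    rw [hPe]
    exact NN_Mm a b 1 0 m
  · rintro ⟨q, hq⟩
    have h1 : ev ![0,1,1] (P a b) = 0 := by
      rw [hq, _root_.map_mul]
      simp [ev]
    have h2 := pos_u (a := a) hb1
    rw [← hPe] at h2
    omega
  · rintro ⟨q, hq⟩
    have h1 : ev ![1,0,1] (P a b) = 0 := by
      rw [hq, _root_.map_mul]
      simp [ev]
    have h2 := pos_v (a := a) hb1
    rw [← hPe] at h2
    omega
  · rintro ⟨q, hq⟩
    have h1 : ev ![1,1,0] (P a b) = 0 := by
      rw [hq, _root_.map_mul]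
      simp [ev]
    have h2 := pos_w (a := a) hb1
    rw [← hPe] at h2
    omega
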